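/- arXiv:2010.00707 — 2 statements merged into one kernel-verified Lean document; each statement's English description precedes it below -/
import Mathlib

section
/- Let n ≥ 2 be an even integer and let p_1, …, p_{n+1} be pairwise distinct prime numbers such that ∑_{j=1}^{n+1} 1/p_j < n/2. Let I be the set of tuples α = (α_1, …, α_{n+1}) of integers with 0 ≤ α_j ≤ p_j − 2 for each j. If (n_α)_{α∈I} are rational numbers such that ∑_{α∈I} n_α ∏_{j=1}^{n+1} ζ_{p_j}^{α_j(β_j+1)} = 0 for every β = (β_1, …, β_{n+1}) ∈ I for which ∑_{j=1}^{n+1} (β_j+1)/p_j < n/2 and ∑_{j=1}^{n+1} (β_j+1)/p_j is not an integer, then n_α = 0 for every α ∈ I. -/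
open scoped BigOperators

/-- The standard primitive `d`-th root of unity `exp(2πi/d)`. -/
noncomputable def zeta (d : ℕ) : ℂ := Complex.exp (2 * Real.pi * Complex.I / d)

/-!
Already the relation for `β = 0`, which is admissible because `∑ 1/p_j` is never an integer,
forces `c = 0`: the products `∏ ζ_{p_j}^{α_j}` are linearly independent over `ℚ`. To see this,
shift a relation by `∏ ζ_{p_j}^{p_j - β_j}` and average it over the Galois group of `ℚ(ζ_N)`,
`N = ∏ p_j`, which acts on each `ζ_{p_j}` independently by the Chinese remainder theorem. The
Ramanujan sums `∑_{u=1}^{p-1} ζ_p^{u m} = p [p ∣ m] - 1` turn this into the linear system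
`(⊗_j (p_j I - J)) c = 0`, and `p I - J` is invertible with inverse `p⁻¹ (I + J)`.
-/

open Finset Polynomial

lemma zeta_isPrimitiveRoot {d : ℕ} (hd : d ≠ 0) : IsPrimitiveRoot (zeta d) d := by
  simpa [zeta] using Complex.isPrimitiveRoot_exp d hd

lemma zeta_mul_pow (p : ℕ) {q : ℕ} (hq : q ≠ 0) : zeta (p * q) ^ q = zeta p := by
  rcases eq_or_ne p 0 with rfl | hp
  · simp [zeta]
  rw [zeta, zeta, ← Complex.exp_nat_mul]
  congr 1
  push_cast
  field_simp

lemma zeta_pow_eq_pow_of_modEq {d a b : ℕ} (hd : d ≠ 0) (h : a ≡ b [MOD d]) :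
    zeta d ^ a = zeta d ^ b := by
  rw [← pow_mod_orderOf, ← pow_mod_orderOf _ b, ← (zeta_isPrimitiveRoot hd).eq_orderOf, h]

lemma IsPrimitiveRoot.sum_mul_pow_mul_eq_zero {K ι : Type*} [Field K] [CharZero K] [Fintype ι]
    {ζ : K} {N : ℕ} (hζ : IsPrimitiveRoot ζ N) (hN : 0 < N) (c : ι → ℚ) (e : ι → ℕ)
    (h : ∑ i, (c i : K) * ζ ^ e i = 0) {t : ℕ} (ht : t.Coprime N) :
    ∑ i, (c i : K) * ζ ^ (t * e i) = 0 := by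
  set P : ℚ[X] := ∑ i, C (c i) * X ^ e i
  have aeval_P (x : K) : aeval x P = ∑ i, (c i : K) * x ^ e i := by simp [P, map_sum]
  have hmin : minpoly ℚ (ζ ^ t) = minpoly ℚ ζ := by
    rw [← cyclotomic_eq_minpoly_rat hζ hN,
      ← cyclotomic_eq_minpoly_rat (hζ.pow_of_coprime t ht) hN]
  have hP : minpoly ℚ ζ ∣ P := minpoly.dvd_iff.mpr ((aeval_P ζ).trans h)
  rw [← hmin, minpoly.dvd_iff, aeval_P] at hP
  simpa only [pow_mul] using hP

lemma IsPrimitiveRoot.sum_pow_succ_mul {K : Type*} [Field K] {ζ : K} {p : ℕ}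
    (hζ : IsPrimitiveRoot ζ p) (hp : p ≠ 0) (m : ℕ) :
    ∑ u : Fin (p - 1), ζ ^ ((u + 1 : ℕ) * m) = (if p ∣ m then (p : K) else 0) - 1 := by
  have hgeom : ∑ k ∈ range p, (ζ ^ m) ^ k = if p ∣ m then (p : K) else 0 := by
    split_ifs with hpm
    · simp [(hζ.pow_eq_one_iff_dvd m).mpr hpm]
    · rw [geom_sum_eq (mt (hζ.pow_eq_one_iff_dvd m).mp hpm), ← pow_mul, mul_comm, pow_mul,
        hζ.pow_eq_one, one_pow, sub_self, zero_div]
  rw [← hgeom, ← Nat.sub_add_cancel (Nat.one_le_iff_ne_zero.mpr hp), sum_range_succ',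
    Fin.sum_univ_eq_sum_range (fun k => ζ ^ ((k + 1) * m))]
  simp only [Nat.add_sub_cancel, pow_zero, add_sub_cancel_right, ← pow_mul, mul_comm m]

lemma exists_coprime_prod_modEq {ι : Type*} [Fintype ι] {p : ι → ℕ} (hp : ∀ i, (p i).Prime)
    (hinj : Function.Injective p) (a : ι → ℕ) (ha : ∀ i, ¬ p i ∣ a i) :
    ∃ t : ℕ, t.Coprime (∏ i, p i) ∧ ∀ i, t ≡ a i [MOD p i] := by
  have hcop : Set.Pairwise (univ : Finset ι) (Function.onFun Nat.Coprime p) :=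
    fun i _ j _ hij => (Nat.coprime_primes (hp i) (hp j)).mpr (hinj.ne hij)
  obtain ⟨t, ht⟩ := Nat.chineseRemainderOfFinset a p univ (fun i _ => (hp i).ne_zero) hcop
  refine ⟨t, Nat.Coprime.prod_right fun i _ => ?_, fun i => ht i (mem_univ i)⟩
  exact Nat.Coprime.symm ((hp i).coprime_iff_not_dvd.mpr
    (((ht i (mem_univ i)).dvd_iff dvd_rfl).not.mpr (ha i)))

section PrimeRoots

variable {ι : Type*} [Fintype ι] {p : ι → ℕ}

lemma prod_zeta_pow_eq_zeta_prod_pow [DecidableEq ι] (hp : ∀ i, p i ≠ 0) (m : ι → ℕ) :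
    ∏ i, zeta (p i) ^ m i = zeta (∏ i, p i) ^ ∑ i, (∏ j ∈ univ.erase i, p j) * m i := by
  rw [← prod_pow_eq_pow_sum]
  refine prod_congr rfl fun i _ => ?_
  rw [pow_mul, ← mul_prod_erase univ p (mem_univ i),
    zeta_mul_pow _ (prod_ne_zero_iff.mpr fun j _ => hp j)]

lemma prod_zeta_pow_congr (hp : ∀ i, p i ≠ 0) {m m' : ι → ℕ}
    (h : ∀ i, m i ≡ m' i [MOD p i]) :
    ∏ i, zeta (p i) ^ m i = ∏ i, zeta (p i) ^ m' i :=
  prod_congr rfl fun i _ => zeta_pow_eq_pow_of_modEq (hp i) (h i)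

variable {κ : Type*} [Fintype κ] (c : κ → ℚ) (m : κ → ι → ℕ)

lemma sum_mul_prod_zeta_pow_mul_eq_zero (hp : ∀ i, p i ≠ 0)
    (h : ∑ k, (c k : ℂ) * ∏ i, zeta (p i) ^ m k i = 0) {t : ℕ}
    (ht : t.Coprime (∏ i, p i)) :
    ∑ k, (c k : ℂ) * ∏ i, zeta (p i) ^ (t * m k i) = 0 := by
  classical
  have hN : 0 < ∏ i, p i := Nat.pos_of_ne_zero (prod_ne_zero_iff.mpr fun i _ => hp i)
  simp only [prod_zeta_pow_eq_zeta_prod_pow hp] at h ⊢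
  convert (zeta_isPrimitiveRoot hN.ne').sum_mul_pow_mul_eq_zero hN c _ h ht using 4
  rw [mul_sum]
  exact sum_congr rfl fun i _ => by ring

lemma sum_mul_prod_ite_dvd_eq_zero (hp : ∀ i, (p i).Prime) (hinj : Function.Injective p)
    (h : ∑ k, (c k : ℂ) * ∏ i, zeta (p i) ^ m k i = 0) :
    ∑ k, (c k : ℂ) * ∏ i, ((if p i ∣ m k i then (p i : ℂ) else 0) - 1) = 0 := by
  classical
  have hp0 i : p i ≠ 0 := (hp i).ne_zero
  have conj (u : ∀ i, Fin (p i - 1)) :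
      ∑ k, (c k : ℂ) * ∏ i, zeta (p i) ^ ((u i + 1 : ℕ) * m k i) = 0 := by
    obtain ⟨t, ht, htu⟩ := exists_coprime_prod_modEq hp hinj (fun i => u i + 1)
      fun i => Nat.not_dvd_of_pos_of_lt (Nat.succ_pos _) (by have := (u i).isLt; omega)
    rw [← sum_mul_prod_zeta_pow_mul_eq_zero c m hp0 h ht]
    exact sum_congr rfl fun k _ =>
      congrArg _ (prod_zeta_pow_congr hp0 fun i => ((htu i).mul_right _).symm)
  calc ∑ k, (c k : ℂ) * ∏ i, ((if p i ∣ m k i then (p i : ℂ) else 0) - 1)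
      = ∑ k, (c k : ℂ) * ∏ i,
          ∑ u : Fin (p i - 1), zeta (p i) ^ ((u + 1 : ℕ) * m k i) := by
        simp only [(zeta_isPrimitiveRoot (hp0 _)).sum_pow_succ_mul (hp0 _)]
    _ = ∑ u : ∀ i, Fin (p i - 1),
          ∑ k, (c k : ℂ) * ∏ i, zeta (p i) ^ ((u i + 1 : ℕ) * m k i) := by
        simp only [Fintype.prod_sum, mul_sum]
        exact sum_comm
    _ = 0 := sum_eq_zero fun u _ => conj u

end PrimeRoots

section Inversion

variable {K : Type*} [Field K]

/-- `(p I - J)⁻¹ = p⁻¹ (I + J)` on `Fin (p - 1)`. -/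
lemma sum_ite_add_one_mul_ite_sub_one {p : ℕ} (hp : p ≠ 0) (a g : Fin (p - 1)) :
    ∑ b, ((if g = b then 1 else 0) + 1) * ((if a = b then (p : K) else 0) - 1) =
      if a = g then (p : K) else 0 := by
  have hcard : ((p - 1 : ℕ) : K) = p - 1 := by
    rw [Nat.cast_sub (Nat.one_le_iff_ne_zero.mpr hp), Nat.cast_one]
  simp only [add_mul, mul_sub, one_mul, mul_one, sum_add_distrib, sum_sub_distrib, ite_mul,
    zero_mul, sum_ite_eq, mem_univ, if_true, sum_const, card_univ, Fintype.card_fin, nsmul_eq_mul,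
    hcard]
  split_ifs <;> simp

variable [CharZero K] {ι : Type*} [Fintype ι] [DecidableEq ι] {p : ι → ℕ}

lemma eq_zero_of_forall_sum_mul_prod_ite_sub_one (hp : ∀ i, p i ≠ 0)
    (c : (∀ i, Fin (p i - 1)) → K)
    (h : ∀ β : ∀ i, Fin (p i - 1),
      ∑ α, c α * ∏ i, ((if α i = β i then (p i : K) else 0) - 1) = 0)
    (γ : ∀ i, Fin (p i - 1)) : c γ = 0 := by
  have key : ∑ β : ∀ i, Fin (p i - 1), (∏ i, ((if γ i = β i then 1 else 0) + 1)) *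
      ∑ α, c α * ∏ i, ((if α i = β i then (p i : K) else 0) - 1) =
        c γ * ∏ i, (p i : K) := by
    calc _ = ∑ α, c α * ∑ β : ∀ i, Fin (p i - 1), ∏ i,
          ((if γ i = β i then 1 else 0) + 1) * ((if α i = β i then (p i : K) else 0) - 1) := by
          simp_rw [mul_sum, prod_mul_distrib]
          rw [sum_comm]
          exact sum_congr rfl fun _ _ => sum_congr rfl fun _ _ => by ring
      _ = ∑ α, c α * ∏ i, if α i = γ i then (p i : K) else 0 := by
          refine sum_congr rfl fun α _ => congrArg _ ?_
          rw [← Fintype.prod_sum (fun i b => ((if γ i = b then 1 else 0) + 1) *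
            ((if α i = b then (p i : K) else 0) - 1))]
          exact prod_congr rfl fun i _ => sum_ite_add_one_mul_ite_sub_one (hp i) _ _
      _ = c γ * ∏ i, (p i : K) := by
          simp_rw [Fintype.prod_ite_zero, ← funext_iff]
          simp
  have hN : ∏ i, (p i : K) ≠ 0 := prod_ne_zero_iff.mpr fun i _ => Nat.cast_ne_zero.mpr (hp i)
  simpa [h, hN] using key.symm

end Inversion

lemma add_sub_dvd_iff_eq {p : ℕ} {a b : Fin (p - 1)} : p ∣ a + (p - b) ↔ a = b := by
  have ha := a.isLt
  have hb := b.isLt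
  refine ⟨fun h => Fin.ext ?_, fun h => by rw [h, Nat.add_sub_cancel' (by omega)]⟩
  have := Nat.eq_of_dvd_of_lt_two_mul (by omega) h (by omega)
  omega

theorem linearIndependent_prod_zeta_pow {ι : Type*} [Fintype ι] {p : ι → ℕ}
    (hp : ∀ i, (p i).Prime) (hinj : Function.Injective p) :
    LinearIndependent ℚ (fun α : ∀ i, Fin (p i - 1) => ∏ i, zeta (p i) ^ (α i : ℕ)) := by
  classical
  refine Fintype.linearIndependent_iff.mpr fun c hc γ => ?_
  simp only [Rat.smul_def] at hc
  have shifted (β : ∀ i, Fin (p i - 1)) :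
      ∑ α, (c α : ℂ) * ∏ i, zeta (p i) ^ ((α i : ℕ) + (p i - β i)) = 0 := by
    simp_rw [pow_add, prod_mul_distrib, ← mul_assoc, ← sum_mul, hc, zero_mul]
  have := eq_zero_of_forall_sum_mul_prod_ite_sub_one (fun i => (hp i).ne_zero)
    (fun α => (c α : ℂ)) (fun β => by
      simpa only [add_sub_dvd_iff_eq] using
        sum_mul_prod_ite_dvd_eq_zero c _ hp hinj (shifted β)) γ
  exact_mod_cast this

lemma sum_one_div_ne_intCast {ι : Type*} [Fintype ι] [Nonempty ι] {p : ι → ℕ}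
    (hp : ∀ i, (p i).Prime) (hinj : Function.Injective p) (z : ℤ) :
    ∑ i, (1 : ℚ) / p i ≠ z := by
  classical
  intro hz
  obtain ⟨i₀⟩ := ‹Nonempty ι›
  set q : ι → ℕ := fun i => ∏ j ∈ univ.erase i, p j
  have hq : ∑ i, (q i : ℤ) = z * ∏ i, (p i : ℤ) := by
    have hpq (i) : (1 : ℚ) / p i * ∏ j, (p j : ℚ) = q i := by
      rw [← mul_prod_erase univ _ (mem_univ i), one_div,
        inv_mul_cancel_left₀ (by exact_mod_cast (hp i).ne_zero)]
      push_cast [q]; rfl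
    have hqQ : ∑ i, (q i : ℚ) = z * ∏ i, (p i : ℚ) := by
      rw [← hz, sum_mul]
      simp_rw [hpq]
    exact_mod_cast hqQ
  have hrest : (p i₀ : ℤ) ∣ ∑ i ∈ univ.erase i₀, (q i : ℤ) := dvd_sum fun i hi =>
    Int.natCast_dvd_natCast.mpr
      (dvd_prod_of_mem p (mem_erase.mpr ⟨(ne_of_mem_erase hi).symm, mem_univ _⟩))
  have hall : (p i₀ : ℤ) ∣ ∑ i, (q i : ℤ) := hq ▸ dvd_mul_of_dvd_right
    (by exact_mod_cast dvd_prod_of_mem p (mem_univ i₀)) z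
  rw [← add_sum_erase _ _ (mem_univ i₀), dvd_add_left hrest, Int.natCast_dvd_natCast] at hall
  obtain ⟨j, hj, hdvd⟩ := (hp i₀).prime.exists_mem_finset_dvd hall
  exact ne_of_mem_erase hj (hinj ((Nat.prime_dvd_prime_iff_eq (hp i₀) (hp j)).mp hdvd)).symm

theorem stmt7_general (n : ℕ)
    (p : Fin (n + 1) → ℕ) (hp : ∀ j, (p j).Prime) (hdist : Function.Injective p)
    (hsum : ∑ j, (1 : ℚ) / (p j) < (n : ℚ) / 2)
    (c : (∀ j, Fin (p j - 1)) → ℚ)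
    (h : ∀ β : (∀ j, Fin (p j - 1)),
        (∑ j, ((β j : ℚ) + 1) / (p j) < (n : ℚ) / 2) →
        (∀ z : ℤ, (∑ j, ((β j : ℚ) + 1) / (p j)) ≠ (z : ℚ)) →
        ∑ α : (∀ j, Fin (p j - 1)),
          (c α : ℂ) * ∏ j, zeta (p j) ^ ((α j : ℕ) * ((β j : ℕ) + 1)) = 0) :
    ∀ α, c α = 0 := by
  let β₀ : ∀ j, Fin (p j - 1) := fun j => ⟨0, Nat.sub_pos_of_lt (hp j).one_lt⟩
  have hβ₀ : ∑ j, ((β₀ j : ℚ) + 1) / p j = ∑ j, (1 : ℚ) / p j := by simp [β₀]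
  have hrel := h β₀ (hβ₀ ▸ hsum) (hβ₀ ▸ sum_one_div_ne_intCast hp hdist)
  refine Fintype.linearIndependent_iff.mp (linearIndependent_prod_zeta_pow hp hdist) c ?_
  simpa [β₀, Rat.smul_def] using hrel

theorem stmt7 (n : ℕ) (hn : Even n) (hn2 : 2 ≤ n)
    (p : Fin (n + 1) → ℕ) (hp : ∀ j, (p j).Prime) (hdist : Function.Injective p)
    (hsum : ∑ j, (1 : ℚ) / (p j) < (n : ℚ) / 2)
    (c : (∀ j, Fin (p j - 1)) → ℚ)
    (h : ∀ β : (∀ j, Fin (p j - 1)),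
        (∑ j, ((β j : ℚ) + 1) / (p j) < (n : ℚ) / 2) →
        (∀ z : ℤ, (∑ j, ((β j : ℚ) + 1) / (p j)) ≠ (z : ℚ)) →
        ∑ α : (∀ j, Fin (p j - 1)),
          (c α : ℂ) * ∏ j, zeta (p j) ^ ((α j : ℕ) * ((β j : ℕ) + 1)) = 0) :
    ∀ α, c α = 0 :=
  stmt7_general n p hp hdist hsum c h
end

section
/- For every real number λ with 0 < λ < 2, one has 4·(λ²−λ+1)·F(2/3, −5/3, 4/3; 1−λ) − (1/3)·(λ+1)·(8λ²−11λ+8)·F(2/3, −2/3, 4/3; 1−λ) + λ·(1−λ)²·F(2/3, 1/3, 4/3; 1−λ) = (1/3)·λ^{4/3}·(λ+1). -/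
open scoped BigOperators

/-- The Gauss hypergeometric series `F(a,b,c;z)`. -/
noncomputable def hypF (a b c z : ℝ) : ℝ :=
  ∑' n : ℕ,
    (Polynomial.eval a (ascPochhammer ℝ n) * Polynomial.eval b (ascPochhammer ℝ n) /
      (Polynomial.eval c (ascPochhammer ℝ n) * (n.factorial : ℝ))) * z ^ n

/-!
Put `z = 1 - λ`. Gauss's contiguous relation
`2 F(-5/3) - (8/3 - 4z/3) F(-2/3) + (2/3)(1 - z) F(1/3) = 0` (all with `a = 2/3`, `c = 4/3`)
eliminates `F(-5/3)`, after which the left-hand side factors as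
`(1/3)(1 - z)(2 - z) (3 F(-2/3) - (2 - z) F(1/3))`, and
`3 F(-2/3) - (2 - z) F(1/3) = (1 - z)^{1/3} = F(-1/3, 4/3, 4/3; z)`.
Both relations are checked coefficientwise: every coefficient involved is a rational function of
`n` times `(2/3)_n / n!`.
-/

open Polynomial

noncomputable def hypCoeff (a b c : ℝ) (n : ℕ) : ℝ :=
  (ascPochhammer ℝ n).eval a * (ascPochhammer ℝ n).eval b /
    ((ascPochhammer ℝ n).eval c * n.factorial)

theorem ordinaryHypergeometricSeries_apply_eq_hypCoeff (a b c z : ℝ) (n : ℕ) :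
    ordinaryHypergeometricSeries ℝ a b c n (fun _ => z) = hypCoeff a b c n * z ^ n := by
  rw [ordinaryHypergeometricSeries_apply_eq, smul_eq_mul, hypCoeff]
  ring

theorem ascPochhammer_eval_mul_add {S : Type*} [CommSemiring S] (a : S) (n : ℕ) :
    (ascPochhammer S n).eval a * (a + n) = a * (ascPochhammer S n).eval (a + 1) := by
  rw [← ascPochhammer_succ_eval, ascPochhammer_succ_left]
  simp

theorem hypCoeff_zero (a b c : ℝ) : hypCoeff a b c 0 = 1 := by
  simp [hypCoeff]

theorem hypCoeff_mul_add_right (a b c : ℝ) (n : ℕ) :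
    hypCoeff a b c n * (b + n) = b * hypCoeff a (b + 1) c n := by
  simp only [hypCoeff, div_mul_eq_mul_div, mul_div_assoc']
  rw [mul_assoc _ (eval b _), ascPochhammer_eval_mul_add]
  ring

theorem hypCoeff_mul_add_left (a b c : ℝ) (n : ℕ) :
    hypCoeff a b c n * (a + n) = a * hypCoeff (a + 1) b c n := by
  simp only [hypCoeff, div_mul_eq_mul_div, mul_div_assoc']
  rw [mul_right_comm _ (eval b _), ascPochhammer_eval_mul_add]
  ring

theorem hypCoeff_succ (a b c : ℝ) {n : ℕ} (hc : c + n ≠ 0) :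
    hypCoeff a b c (n + 1) * ((c + n) * (n + 1)) = hypCoeff a b c n * ((a + n) * (b + n)) := by
  simp only [hypCoeff, ascPochhammer_succ_eval, Nat.factorial_succ, Nat.cast_mul, Nat.cast_succ]
  field_simp

theorem one_le_radius_ordinaryHypergeometricSeries (a b c : ℝ) :
    1 ≤ (ordinaryHypergeometricSeries ℝ a b c).radius := by
  by_cases ha : ∃ k : ℕ, a = -k
  · obtain ⟨k, rfl⟩ := ha
    simp [ordinaryHypergeometric_radius_top_of_neg_nat₁]
  by_cases hb : ∃ k : ℕ, b = -k
  · obtain ⟨k, rfl⟩ := hb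
    simp [ordinaryHypergeometric_radius_top_of_neg_nat₂]
  by_cases hc : ∃ k : ℕ, c = -k
  · obtain ⟨k, rfl⟩ := hc
    simp [ordinaryHypergeometric_radius_top_of_neg_nat₃]
  rw [ordinaryHypergeometricSeries_radius_eq_one]
  exact fun k => ⟨fun h => ha ⟨k, by linarith⟩, fun h => hb ⟨k, by linarith⟩,
    fun h => hc ⟨k, by linarith⟩⟩

theorem hasSum_hypF (a b c : ℝ) {z : ℝ} (hz : |z| < 1) :
    HasSum (fun n => hypCoeff a b c n * z ^ n) (hypF a b c z) := by
  have hz' : z ∈ Metric.eball (0 : ℝ) (ordinaryHypergeometricSeries ℝ a b c).radius := by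
    refine lt_of_lt_of_le ?_ (one_le_radius_ordinaryHypergeometricSeries a b c)
    simpa [edist_zero_right, enorm_eq_nnnorm, ← NNReal.coe_lt_coe] using hz
  have hs := (ordinaryHypergeometricSeries ℝ a b c).summable hz'
  simp only [ordinaryHypergeometricSeries_apply_eq_hypCoeff] at hs
  exact hs.hasSum

theorem hasSum_one_sub_rpow (a : ℝ) {b : ℝ} (hb : ∀ k : ℕ, (k : ℝ) ≠ -b) {z : ℝ}
    (hz : |z| < 1) :
    HasSum (fun n => hypCoeff (-a) b b n * z ^ n) ((1 - z) ^ a) := by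
  have h := (Real.one_add_rpow_hasFPowerSeriesOnBall_zero (a := a)).hasSum (y := -z)
    (by simpa [edist_zero_right, enorm_eq_nnnorm, ← NNReal.coe_lt_coe] using hz)
  rw [binomialSeries_eq_ordinaryHypergeometricSeries hb] at h
  simp only [FormalMultilinearSeries.compContinuousLinearMap_apply, Function.comp_def,
    ordinaryHypergeometricSeries_apply_eq_hypCoeff] at h
  simpa [← sub_eq_add_neg] using h

theorem add_mul_eq_of_hasSum {R : Type*} [CommRing R] [TopologicalSpace R] [IsTopologicalRing R]
    [T2Space R] {p q r : ℕ → R} {z P Q S : R}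
    (hp : HasSum (fun n => p n * z ^ n) P) (hq : HasSum (fun n => q n * z ^ n) Q)
    (hr : HasSum (fun n => r n * z ^ n) S) (h0 : p 0 = r 0)
    (hsucc : ∀ n, p (n + 1) + q n = r (n + 1)) : P + z * Q = S := by
  have hp' := (hasSum_nat_add_iff' 1).mpr hp
  have hr' := (hasSum_nat_add_iff' 1).mpr hr
  have hsum := hp'.add (hq.mul_left z)
  simp only [Finset.sum_range_one, pow_zero, mul_one, h0] at hp' hr' hsum
  have := hsum.unique (hr'.congr_fun fun n => by rw [← hsucc n]; ring)
  linear_combination this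

theorem three_mul_natCast_sub_ne_zero (n k : ℕ) (hk : k % 3 ≠ 0) : 3 * (n : ℝ) - k ≠ 0 := by
  intro h
  have h' : ((3 * n : ℕ) : ℝ) = k := by push_cast; linarith
  norm_cast at h'
  omega

-- `hypCoeff (2/3) (4/3) (4/3) n = (2/3)_n / n!`, and `hypCoeff (-1/3) (4/3) (4/3) n` is the
-- coefficient of `z ^ n` in `(1 - z) ^ (1/3)`. Otherwise `a = 2/3` and `c = 4/3` below, and names
-- record `b` only.
theorem hypCoeff_four_thirds_succ (n : ℕ) :
    hypCoeff (2/3) (4/3) (4/3) (n + 1)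
      = hypCoeff (2/3) (4/3) (4/3) n * (3 * n + 2) / (3 * n + 3) := by
  have h := hypCoeff_succ (2/3) (4/3) (4/3) (n := n) (by positivity)
  rw [eq_div_iff (by positivity)]
  apply mul_left_cancel₀ (by positivity : (4/3 + n : ℝ) ≠ 0)
  linear_combination 3 * h

theorem hypCoeff_one_third (n : ℕ) :
    hypCoeff (2/3) (1/3) (4/3) n = hypCoeff (2/3) (4/3) (4/3) n / (3 * n + 1) := by
  have h := hypCoeff_mul_add_right (2/3) (1/3) (4/3) n
  rw [show (1/3 : ℝ) + 1 = 4/3 by norm_num] at h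
  rw [eq_div_iff (by positivity)]
  linear_combination 3 * h

theorem hypCoeff_neg_two_thirds (n : ℕ) :
    hypCoeff (2/3) (-2/3) (4/3) n
      = -2 * hypCoeff (2/3) (4/3) (4/3) n / ((3 * n - 2) * (3 * n + 1)) := by
  have h := hypCoeff_mul_add_right (2/3) (-2/3) (4/3) n
  rw [show (-2/3 : ℝ) + 1 = 1/3 by norm_num, hypCoeff_one_third] at h
  have h2 : 3 * (n : ℝ) - 2 ≠ 0 := mod_cast three_mul_natCast_sub_ne_zero n 2 (by norm_num)
  rw [mul_div_assoc', eq_div_iff (by positivity)] at h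
  rw [eq_div_iff (by positivity)]
  linear_combination 3 * h

theorem hypCoeff_neg_five_thirds (n : ℕ) :
    hypCoeff (2/3) (-5/3) (4/3) n
      = 10 * hypCoeff (2/3) (4/3) (4/3) n / ((3 * n - 5) * (3 * n - 2) * (3 * n + 1)) := by
  have h := hypCoeff_mul_add_right (2/3) (-5/3) (4/3) n
  rw [show (-5/3 : ℝ) + 1 = -2/3 by norm_num, hypCoeff_neg_two_thirds] at h
  have h2 : 3 * (n : ℝ) - 2 ≠ 0 := mod_cast three_mul_natCast_sub_ne_zero n 2 (by norm_num)
  have h5 : 3 * (n : ℝ) - 5 ≠ 0 := mod_cast three_mul_natCast_sub_ne_zero n 5 (by norm_num)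
  rw [mul_div_assoc', eq_div_iff (by positivity)] at h
  rw [eq_div_iff (by positivity)]
  linear_combination 3 * h

theorem hypCoeff_binomial_one_third (n : ℕ) :
    hypCoeff (-1/3) (4/3) (4/3) n = -hypCoeff (2/3) (4/3) (4/3) n / (3 * n - 1) := by
  have h := hypCoeff_mul_add_left (-1/3) (4/3) (4/3) n
  rw [show (-1/3 : ℝ) + 1 = 2/3 by norm_num] at h
  have h1 : 3 * (n : ℝ) - 1 ≠ 0 := mod_cast three_mul_natCast_sub_ne_zero n 1 (by norm_num)
  rw [eq_div_iff h1]
  linear_combination 3 * h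

theorem hypCoeff_contiguous_succ (n : ℕ) :
    2 * hypCoeff (2/3) (-5/3) (4/3) (n + 1) - 8/3 * hypCoeff (2/3) (-2/3) (4/3) (n + 1)
      + 2/3 * hypCoeff (2/3) (1/3) (4/3) (n + 1)
      + (4/3 * hypCoeff (2/3) (-2/3) (4/3) n - 2/3 * hypCoeff (2/3) (1/3) (4/3) n) = 0 := by
  have hn2 : 3 * (n : ℝ) - 2 ≠ 0 := mod_cast three_mul_natCast_sub_ne_zero n 2 (by norm_num)
  have hn2' : 3 * ((n : ℝ) + 1) - 5 ≠ 0 := by convert hn2 using 1; ring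
  have hn1 : 3 * (n : ℝ) + 1 ≠ 0 := by positivity
  have hn1' : 3 * ((n : ℝ) + 1) - 2 ≠ 0 := by convert hn1 using 1; ring
  simp only [hypCoeff_neg_five_thirds, hypCoeff_neg_two_thirds, hypCoeff_one_third,
    hypCoeff_four_thirds_succ]
  push_cast
  field_simp
  ring

theorem hypCoeff_binomial_succ (n : ℕ) :
    3 * hypCoeff (2/3) (-2/3) (4/3) (n + 1) - 2 * hypCoeff (2/3) (1/3) (4/3) (n + 1)
      + hypCoeff (2/3) (1/3) (4/3) n = hypCoeff (-1/3) (4/3) (4/3) (n + 1) := by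
  have hn1 : 3 * (n : ℝ) + 1 ≠ 0 := by positivity
  have hn1' : 3 * ((n : ℝ) + 1) - 2 ≠ 0 := by convert hn1 using 1; ring
  have hn2 : 3 * ((n : ℝ) + 1) - 1 ≠ 0 := by linarith [n.cast_nonneg (α := ℝ)]
  simp only [hypCoeff_neg_two_thirds, hypCoeff_one_third, hypCoeff_binomial_one_third,
    hypCoeff_four_thirds_succ]
  push_cast
  field_simp
  ring

theorem hypF_contiguous {z : ℝ} (hz : |z| < 1) :
    2 * hypF (2/3) (-5/3) (4/3) z - 8/3 * hypF (2/3) (-2/3) (4/3) z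
      + 2/3 * hypF (2/3) (1/3) (4/3) z
      + z * (4/3 * hypF (2/3) (-2/3) (4/3) z - 2/3 * hypF (2/3) (1/3) (4/3) z) = 0 := by
  have hf := hasSum_hypF (2/3) (-5/3) (4/3) hz
  have hd := hasSum_hypF (2/3) (-2/3) (4/3) hz
  have he := hasSum_hypF (2/3) (1/3) (4/3) hz
  refine add_mul_eq_of_hasSum
    (p := fun n => 2 * hypCoeff (2/3) (-5/3) (4/3) n - 8/3 * hypCoeff (2/3) (-2/3) (4/3) n
      + 2/3 * hypCoeff (2/3) (1/3) (4/3) n)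
    (q := fun n => 4/3 * hypCoeff (2/3) (-2/3) (4/3) n - 2/3 * hypCoeff (2/3) (1/3) (4/3) n)
    (r := fun _ => 0) ?_ ?_ (by simp) ?_ hypCoeff_contiguous_succ
  · simpa only [add_mul, sub_mul, mul_assoc] using
      (((hf.mul_left 2).sub (hd.mul_left (8/3))).add (he.mul_left (2/3)))
  · simpa only [sub_mul, mul_assoc] using (hd.mul_left (4/3)).sub (he.mul_left (2/3))
  · simp only [hypCoeff_zero]; norm_num

theorem hypF_binomial {z : ℝ} (hz : |z| < 1) :
    3 * hypF (2/3) (-2/3) (4/3) z - 2 * hypF (2/3) (1/3) (4/3) z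
      + z * hypF (2/3) (1/3) (4/3) z = (1 - z) ^ (1/3 : ℝ) := by
  have hd := hasSum_hypF (2/3) (-2/3) (4/3) hz
  have he := hasSum_hypF (2/3) (1/3) (4/3) hz
  have hb := hasSum_one_sub_rpow (1/3) (b := 4/3)
    (fun k => by linarith [k.cast_nonneg (α := ℝ)]) hz
  rw [show -(1/3 : ℝ) = -1/3 by norm_num] at hb
  refine add_mul_eq_of_hasSum
    (p := fun n => 3 * hypCoeff (2/3) (-2/3) (4/3) n - 2 * hypCoeff (2/3) (1/3) (4/3) n)
    ?_ he hb ?_ hypCoeff_binomial_succ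
  · simpa only [sub_mul, mul_assoc] using (hd.mul_left 3).sub (he.mul_left 2)
  · simp only [hypCoeff_zero]; norm_num

theorem stmt13 (l : ℝ) (h0 : 0 < l) (h2 : l < 2) :
    4 * (l ^ 2 - l + 1) * hypF (2 / 3) (-5 / 3) (4 / 3) (1 - l)
      - (1 / 3) * (l + 1) * (8 * l ^ 2 - 11 * l + 8) * hypF (2 / 3) (-2 / 3) (4 / 3) (1 - l)
      + l * (1 - l) ^ 2 * hypF (2 / 3) (1 / 3) (4 / 3) (1 - l)
      = (1 / 3) * l ^ ((4 : ℝ) / 3) * (l + 1) := by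
  have hz : |1 - l| < 1 := by rw [abs_lt]; constructor <;> linarith
  have hcontig := hypF_contiguous hz
  have hbinom := hypF_binomial hz
  rw [sub_sub_cancel] at hbinom
  rw [show l ^ ((4 : ℝ) / 3) = l * l ^ (1 / 3 : ℝ) by
    rw [← Real.rpow_one_add' h0.le (by norm_num)]; norm_num]
  linear_combination (2 * (l ^ 2 - l + 1)) * hcontig + (1 / 3 * l * (l + 1)) * hbinom
end
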